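/- arXiv:2410.18534 — 6 statements merged into one kernel-verified Lean document; each statement's English description precedes it below -/
import Mathlib

section
/- Let s : ℕ → ℝ satisfy s(0) = 1, s(n) = 2·Σ_{a+b=n-1} s(a)s(b) for n ≥ 1. Then s(n) ≤ 2(n-1)·s(1)·s(n-1) for all n ≥ 2. -/
theorem stmt_7 (s : ℕ → ℝ) (h0 : s 0 = 1)
    (hrec : ∀ n, 1 ≤ n →
      s n = 2 * ∑ i ∈ Finset.range n, s i * s (n - 1 - i)) :
    ∀ n : ℕ, 2 ≤ n → s n ≤ 2 * ((n : ℝ) - 1) * s 1 * s (n - 1) := by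
  have hrec' : ∀ m : ℕ, s (m+1) = 2 * ∑ i ∈ Finset.range (m+1), s i * s (m - i) := by
    intro m
    have h := hrec (m+1) (by omega)
    simpa using h
  have spos : ∀ n, 0 < s n := by
    intro n
    induction n using Nat.strong_induction_on with
    | _ n ih =>
      match n with
      | 0 => rw [h0]; norm_num
      | m+1 =>
        rw [hrec' m]
        have hpos : 0 < ∑ i ∈ Finset.range (m+1), s i * s (m - i) := by
          apply Finset.sum_pos
          · intro i hi
            simp only [Finset.mem_range] at hi
            exact mul_pos (ih i (by omega)) (ih (m - i) (by omega))
          · exact Finset.nonempty_range_iff.mpr (by omega)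
        linarith
  have s1 : s 1 = 2 := by
    have h := hrec' 0
    simp [h0] at h
    linarith
  have mono : ∀ n, 2 * s n ≤ s (n+1) := by
    intro n
    rw [hrec' n]
    have h1 : s n * s (n - n) ≤ ∑ i ∈ Finset.range (n+1), s i * s (n - i) := by
      apply Finset.single_le_sum (f := fun i => s i * s (n - i))
      · intro i _; exact le_of_lt (mul_pos (spos i) (spos (n - i)))
      · simp
    simp only [Nat.sub_self, h0, mul_one] at h1
    linarith
  have key : ∀ a, ∀ b, 1 ≤ b → s (a+1) * s b ≤ 2 * s (a + b) := by
    intro a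
    induction a using Nat.strong_induction_on with
    | _ a ih =>
      match a with
      | 0 =>
        intro b hb
        rw [s1]
        simp
      | m+1 =>
        intro b hb
        rw [show m + 1 + b = m + b + 1 from by omega]
        rw [hrec' (m+1)]
        rw [Finset.sum_range_succ']
        simp only [Nat.add_sub_add_right, Nat.sub_zero, h0, one_mul]
        -- goal : 2 * ((∑ c ∈ range (m+1), s (c+1) * s (m - c)) + s (m+1)) * s b ≤ 2 * s (m+1+b)
        have hA : (∑ c ∈ Finset.range (m+1), s (c+1) * s (m - c)) * s b
            ≤ ∑ c ∈ Finset.range (m+1), 2 * s (c + b) * s (m - c) := by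
          rw [Finset.sum_mul]
          apply Finset.sum_le_sum
          intro c hc
          simp only [Finset.mem_range] at hc
          have h1 := ih c (by omega) b hb
          nlinarith [spos (m - c), spos b, spos (c+1)]
        have hB : s (m+1) * s b ≤ 2 * s (m + b) := ih m (by omega) b hb
        have hreflect : ∑ d ∈ Finset.range (m+1), s d * s (m + b - d)
            = ∑ c ∈ Finset.range (m+1), s (c + b) * s (m - c) := by
          rw [← Finset.sum_range_reflect (fun d => s d * s (m + b - d)) (m+1)]
          apply Finset.sum_congr rfl
          intro j hj
          simp only [Finset.mem_range] at hj
          have e1 : m + 1 - 1 - j = m - j := by omega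
          have e2 : m + b - (m - j) = j + b := by omega
          simp only [e1, e2]
          ring
        have hnotmem : (m + b) ∉ Finset.range (m+1) := by
          simp only [Finset.mem_range]; omega
        have hsub : ∑ d ∈ Finset.range (m+1), s d * s (m + b - d) + s (m + b) * s 0
            ≤ ∑ d ∈ Finset.range (m + b + 1), s d * s (m + b - d) := by
          have heq : ∑ d ∈ insert (m + b) (Finset.range (m+1)), s d * s (m + b - d)
              = s (m + b) * s 0 + ∑ d ∈ Finset.range (m+1), s d * s (m + b - d) := by
            rw [Finset.sum_insert hnotmem, Nat.sub_self]
          have hss : insert (m + b) (Finset.range (m+1)) ⊆ Finset.range (m + b + 1) := by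
            intro x hx
            simp only [Finset.mem_insert, Finset.mem_range] at hx ⊢
            omega
          calc ∑ d ∈ Finset.range (m+1), s d * s (m + b - d) + s (m + b) * s 0
              = ∑ d ∈ insert (m + b) (Finset.range (m+1)), s d * s (m + b - d) := by
                rw [heq]; ring
            _ ≤ ∑ d ∈ Finset.range (m + b + 1), s d * s (m + b - d) := by
                apply Finset.sum_le_sum_of_subset_of_nonneg hss
                intro i _ _
                exact le_of_lt (mul_pos (spos i) (spos (m + b - i)))
        have hRHS : s (m + b + 1) = 2 * ∑ d ∈ Finset.range (m + b + 1), s d * s (m + b - d) :=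
          hrec' (m + b)
        rw [hRHS]
        have hc : ∑ c ∈ Finset.range (m+1), 2 * s (c + b) * s (m - c)
            = 2 * ∑ d ∈ Finset.range (m+1), s d * s (m + b - d) := by
          rw [hreflect, Finset.mul_sum]
          apply Finset.sum_congr rfl
          intro c _
          ring
        rw [hc] at hA
        rw [h0, mul_one] at hsub
        nlinarith [spos b, spos (m+1)]
  have claimC : ∀ a b : ℕ, s a * s b ≤ s (a + b) := by
    intro a b
    match a, b with
    | 0, b => rw [h0, one_mul, Nat.zero_add]
    | a+1, 0 => rw [h0, mul_one]
    | a+1, b+1 =>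
      have h1 := key a (b+1) (by omega)
      have h2 := mono (a + (b+1))
      have e : a + (b+1) + 1 = a + 1 + (b+1) := by omega
      rw [e] at h2
      nlinarith [spos (a + (b+1))]
  intro n hn
  obtain ⟨m, rfl⟩ : ∃ m, n = m + 2 := ⟨n - 2, by omega⟩
  rw [hrec' (m+1), s1]
  have hb : ∀ i ∈ Finset.range (m+2), s i * s (m + 1 - i) ≤ s (m+1) := by
    intro i hi
    simp only [Finset.mem_range] at hi
    have h := claimC i (m + 1 - i)
    have e : i + (m + 1 - i) = m + 1 := by omega
    rw [e] at h
    exact h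
  have hsum : ∑ i ∈ Finset.range (m+2), s i * s (m + 1 - i) ≤ (m + 2 : ℝ) * s (m+1) := by
    calc ∑ i ∈ Finset.range (m+2), s i * s (m + 1 - i)
        ≤ ∑ _i ∈ Finset.range (m+2), s (m+1) := Finset.sum_le_sum hb
      _ = (m + 2 : ℝ) * s (m+1) := by
          rw [Finset.sum_const, Finset.card_range]
          ring
  have e2 : m + 2 - 1 = m + 1 := by omega
  rw [e2]
  push_cast
  have hm : (0 : ℝ) ≤ (m : ℝ) := Nat.cast_nonneg m
  nlinarith [spos (m+1)]
end

section
/- Suppose s : ℕ → ℝ is positive and for some constants C ≥ 1 and K ≥ 1 satisfies: for every n ≥ 2 there exists j with n/3 ≤ j ≤ 2n/3 and s(n) ≤ C·n^K·s(j)·s(n-j), together with s(u+v+1) ≥ s(u)·s(v)/C for all u, v. Then there exist constants A, B > 0 such that s(n) ≤ A·n^{B·log n}·s(m)·s(n-m) for all n ≥ 1 and all 0 ≤ m ≤ n. -/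
set_option maxHeartbeats 1000000

lemma stmt9_key (C K s1 : ℝ) (hC : 1 ≤ C) (hK : 1 ≤ K) (hs1 : 0 < s1) :
    ∃ B : ℝ, 0 < B ∧ ∀ n : ℕ, 2 ≤ n → ∀ j : ℕ, 1 ≤ j → (j : ℝ) ≤ 2 * (n : ℝ) / 3 →
      C * C * C * s1 * (n : ℝ) ^ K * ((n : ℝ) + 1) * (j : ℝ) ^ (B * Real.log j)
        ≤ (n : ℝ) ^ (B * Real.log n) := by
  obtain ⟨E, hEdef⟩ : ∃ E : ℝ, E = C * C * C * max s1 1 := ⟨_, rfl⟩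
  have hmax1 : (1:ℝ) ≤ max s1 1 := le_max_right _ _
  have hCC : (1:ℝ) ≤ C * C := by nlinarith
  have hCCC : (1:ℝ) ≤ C * C * C := by nlinarith
  have hE1 : 1 ≤ E := by rw [hEdef]; nlinarith
  have hE0 : (0:ℝ) < E := by linarith
  obtain ⟨c, hcdef⟩ : ∃ c : ℝ, c = Real.log (3/2) := ⟨_, rfl⟩
  have hc : 0 < c := hcdef ▸ Real.log_pos (by norm_num)
  have hlog2 : 0 < Real.log 2 := Real.log_pos (by norm_num)
  obtain ⟨t, htdef⟩ : ∃ t : ℝ, t = Real.log E / Real.log 2 := ⟨_, rfl⟩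
  have ht0 : 0 ≤ t := htdef ▸ div_nonneg (Real.log_nonneg hE1) hlog2.le
  have hB0 : 0 < (K + 2 + t) / c := div_pos (by linarith) hc
  refine ⟨(K + 2 + t) / c, hB0, ?_⟩
  obtain ⟨B, hBdef⟩ : ∃ B : ℝ, B = (K + 2 + t) / c := ⟨_, rfl⟩
  rw [← hBdef]
  rw [← hBdef] at hB0
  have hBc : B * c = K + 2 + t := by rw [hBdef]; field_simp
  intro n hn j hj hj23
  have hN2 : (2:ℝ) ≤ (n:ℝ) := by exact_mod_cast hn
  have hN0 : (0:ℝ) < (n:ℝ) := by linarith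
  have hN1 : (1:ℝ) ≤ (n:ℝ) := by linarith
  have hJ1 : (1:ℝ) ≤ (j:ℝ) := by exact_mod_cast hj
  have hJ0 : (0:ℝ) < (j:ℝ) := by linarith
  have hJN : (j:ℝ) ≤ (n:ℝ) := by nlinarith
  have hlogJ : Real.log j ≤ Real.log n - c := by
    have h1 : Real.log (j:ℝ) ≤ Real.log (2 * (n:ℝ) / 3) :=
      Real.log_le_log hJ0 hj23
    have h2 : (2 * (n:ℝ) / 3) = (n:ℝ) / (3/2) := by ring
    rw [h2, Real.log_div (by linarith) (by norm_num)] at h1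
    rw [hcdef]
    linarith
  have hpow1 : (j:ℝ) ^ (B * Real.log j) ≤ (n:ℝ) ^ (B * Real.log j) :=
    Real.rpow_le_rpow hJ0.le hJN (mul_nonneg hB0.le (Real.log_nonneg hJ1))
  have hpow2 : (n:ℝ) ^ (B * Real.log j) ≤ (n:ℝ) ^ (B * Real.log n - B * c) := by
    apply Real.rpow_le_rpow_of_exponent_le hN1
    nlinarith
  have hlogeq : Real.log 2 * t = Real.log E := by
    rw [htdef]; field_simp
  have h2E : (2:ℝ) ^ t = E := by
    rw [Real.rpow_def_of_pos (by norm_num : (0:ℝ) < 2), hlogeq, Real.exp_log hE0]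
  have hEt : E ≤ (n:ℝ) ^ t := by
    have h2t : (2:ℝ) ^ t ≤ (n:ℝ) ^ t := Real.rpow_le_rpow (by norm_num) hN2 ht0
    linarith [h2E ▸ h2t]
  have hsq : (n:ℝ) ^ (2:ℝ) = (n:ℝ) * (n:ℝ) := by
    rw [show (2:ℝ) = ((2:ℕ):ℝ) by norm_num, Real.rpow_natCast]; ring
  have hscalar : C * C * C * s1 * ((n:ℝ) + 1) ≤ (n:ℝ) ^ (2:ℝ) * (n:ℝ) ^ t := by
    have h1 : (n:ℝ) + 1 ≤ (n:ℝ) ^ (2:ℝ) := by rw [hsq]; nlinarith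
    have h2 : C * C * C * s1 ≤ E := by
      have h3 : s1 ≤ max s1 1 := le_max_left _ _
      rw [hEdef]; nlinarith
    calc C * C * C * s1 * ((n:ℝ)+1) ≤ E * ((n:ℝ)^(2:ℝ)) :=
          mul_le_mul h2 h1 (by linarith) hE0.le
      _ ≤ (n:ℝ)^t * (n:ℝ)^(2:ℝ) := mul_le_mul_of_nonneg_right hEt (by positivity)
      _ = (n:ℝ)^(2:ℝ) * (n:ℝ)^t := by ring
  have hBcpow : (n:ℝ) ^ (B * c) = (n:ℝ)^K * ((n:ℝ)^(2:ℝ) * (n:ℝ)^t) := by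
    rw [hBc, show K + 2 + t = K + ((2:ℝ) + t) by ring, Real.rpow_add hN0,
      Real.rpow_add hN0]
  have hX : C * C * C * s1 * (n:ℝ)^K * ((n:ℝ)+1) ≤ (n:ℝ) ^ (B * c) := by
    rw [hBcpow]
    calc C * C * C * s1 * (n:ℝ)^K * ((n:ℝ)+1)
        = (n:ℝ)^K * (C * C * C * s1 * ((n:ℝ)+1)) := by ring
      _ ≤ (n:ℝ)^K * ((n:ℝ)^(2:ℝ) * (n:ℝ)^t) :=
          mul_le_mul_of_nonneg_left hscalar (by positivity)
  have hfinal : (n:ℝ) ^ (B * Real.log n)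
      = (n:ℝ)^(B*c) * (n:ℝ)^(B*Real.log n - B*c) := by
    rw [← Real.rpow_add hN0]; ring_nf
  rw [hfinal]
  exact mul_le_mul hX (hpow1.trans hpow2) (by positivity) (by positivity)

theorem stmt_9 (s : ℕ → ℝ) (C K : ℝ) (hpos : ∀ n, 0 < s n)
    (hC : 1 ≤ C) (hK : 1 ≤ K)
    (hsplit : ∀ n : ℕ, 2 ≤ n → ∃ j : ℕ, (n : ℝ) / 3 ≤ (j : ℝ) ∧
      (j : ℝ) ≤ 2 * (n : ℝ) / 3 ∧
      s n ≤ C * (n : ℝ) ^ K * s j * s (n - j))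
    (hsuper : ∀ u v : ℕ, s u * s v / C ≤ s (u + v + 1))
    (hstep : ∀ n : ℕ, 2 ≤ n → s n ≤ C * (n : ℝ) * s 1 * s (n - 1)) :
    ∃ A B : ℝ, 0 < A ∧ 0 < B ∧ ∀ n : ℕ, 1 ≤ n → ∀ m : ℕ, m ≤ n →
      s n ≤ A * (n : ℝ) ^ (B * Real.log n) * s m * s (n - m) := by
  obtain ⟨B, hB0, hkey⟩ := stmt9_key C K (s 1) hC hK (hpos 1)
  obtain ⟨A, hAdef⟩ : ∃ A : ℝ, A = max 1 (s 0)⁻¹ := ⟨_, rfl⟩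
  have hA1 : 1 ≤ A := hAdef ▸ le_max_left _ _
  have hA0 : 0 < A := by linarith
  have hAs0 : 1 ≤ A * s 0 := by
    have h1 : (s 0)⁻¹ ≤ A := hAdef ▸ le_max_right _ _
    have h2 : (s 0)⁻¹ * s 0 = 1 := inv_mul_cancel₀ (hpos 0).ne'
    nlinarith [hpos 0]
  have hC0 : (0:ℝ) < C := by linarith
  have hsnn : ∀ k, 0 ≤ s k := fun k => (hpos k).le
  refine ⟨A, B, hA0, hB0, ?_⟩
  intro n
  induction n using Nat.strong_induction_on with
  | _ n IH =>
    intro hn1 m hm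
    by_cases hn2 : 2 ≤ n
    · -- inductive step
      have hN2 : (2:ℝ) ≤ (n:ℝ) := by exact_mod_cast hn2
      have hN0 : (0:ℝ) < (n:ℝ) := by linarith
      obtain ⟨j, hj13, hj23, hsp⟩ := hsplit n hn2
      have hj1 : 1 ≤ j := by
        by_contra h
        have : j = 0 := by omega
        rw [this] at hj13
        simp at hj13
        linarith
      have hjn : j < n := by
        have : (j:ℝ) < (n:ℝ) := by linarith
        exact_mod_cast this
      have hnj1 : 1 ≤ n - j := by omega
      have hnjlt : n - j < n := by omega
      have hnj23 : ((n - j : ℕ):ℝ) ≤ 2 * (n:ℝ) / 3 := by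
        rw [Nat.cast_sub hjn.le]
        linarith
      have hRn : (0:ℝ) ≤ (n:ℝ) ^ (B * Real.log n) := by positivity
      by_cases hmj : m ≤ j
      · -- m fits in the j-part
        have hmn : m < n := lt_of_le_of_lt hmj hjn
        have h2 := IH j hjn (by omega) m hmj
        -- recombination: s(j-m) * s(n-j) ≤ C * C * (n+1) * s 1 * s (n-m)
        have hA' := hsuper (j - m) (n - j)
        have heq : (j - m) + (n - j) + 1 = (n - m) + 1 := by omega
        rw [heq] at hA'
        have hB' := hstep (n - m + 1) (by omega)
        rw [Nat.add_sub_cancel] at hB'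
        have hcast : ((n - m + 1 : ℕ):ℝ) ≤ (n:ℝ) + 1 := by
          have h : (n - m + 1 : ℕ) ≤ n + 1 := by omega
          calc ((n - m + 1 : ℕ):ℝ) ≤ ((n + 1 : ℕ):ℝ) := by exact_mod_cast h
            _ = (n:ℝ) + 1 := by push_cast; ring
        have h3 : s (j - m) * s (n - j) ≤ C * (C * ((n:ℝ) + 1) * s 1 * s (n - m)) := by
          have h4 : s (j - m) * s (n - j) ≤ C * s (n - m + 1) := by
            rw [div_le_iff₀ hC0] at hA'
            linarith [hA']
          have h5 : s (n - m + 1) ≤ C * ((n:ℝ) + 1) * s 1 * s (n - m) := by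
            calc s (n - m + 1) ≤ C * ((n - m + 1 : ℕ):ℝ) * s 1 * s (n - m) := hB'
              _ ≤ C * ((n:ℝ) + 1) * s 1 * s (n - m) := by
                  have h6 : C * ((n - m + 1 : ℕ):ℝ) * (s 1 * s (n - m))
                      ≤ C * ((n:ℝ) + 1) * (s 1 * s (n - m)) :=
                    mul_le_mul_of_nonneg_right (mul_le_mul_of_nonneg_left hcast hC0.le)
                      (mul_nonneg (hsnn 1) (hsnn (n - m)))
                  nlinarith [h6]
          calc s (j - m) * s (n - j) ≤ C * s (n - m + 1) := h4
            _ ≤ C * (C * ((n:ℝ) + 1) * s 1 * s (n - m)) :=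
                mul_le_mul_of_nonneg_left h5 hC0.le
        have hk := hkey n hn2 j hj1 hj23
        calc s n ≤ C * (n:ℝ) ^ K * s j * s (n - j) := hsp
          _ ≤ C * (n:ℝ) ^ K * (A * (j:ℝ) ^ (B * Real.log j) * s m * s (j - m)) * s (n - j) := by
              have hp : (0:ℝ) ≤ C * (n:ℝ) ^ K := by positivity
              exact mul_le_mul_of_nonneg_right (mul_le_mul_of_nonneg_left h2 hp) (hsnn (n - j))
          _ = C * (n:ℝ) ^ K * A * (j:ℝ) ^ (B * Real.log j) * s m *
                (s (j - m) * s (n - j)) := by ring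
          _ ≤ C * (n:ℝ) ^ K * A * (j:ℝ) ^ (B * Real.log j) * s m *
                (C * (C * ((n:ℝ) + 1) * s 1 * s (n - m))) := by
              have hp : (0:ℝ) ≤ C * (n:ℝ) ^ K * A * (j:ℝ) ^ (B * Real.log j) * s m := by
                apply_rules [mul_nonneg, hsnn, hC0.le, hA0.le, Real.rpow_nonneg,
                  Nat.cast_nonneg]
              exact mul_le_mul_of_nonneg_left h3 hp
          _ = A * (C * C * C * s 1 * (n:ℝ) ^ K * ((n:ℝ) + 1) * (j:ℝ) ^ (B * Real.log j)) *
                (s m * s (n - m)) := by ring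
          _ ≤ A * (n:ℝ) ^ (B * Real.log n) * (s m * s (n - m)) := by
              have hp : (0:ℝ) ≤ s m * s (n - m) := mul_nonneg (hsnn m) (hsnn (n - m))
              exact mul_le_mul_of_nonneg_right (mul_le_mul_of_nonneg_left hk hA0.le) hp
          _ = A * (n:ℝ) ^ (B * Real.log n) * s m * s (n - m) := by ring
      · -- m > j : m - j fits in the (n-j)-part
        push_neg at hmj
        have hm2 : 2 ≤ m := by omega
        have h2 := IH (n - j) hnjlt (by omega) (m - j) (by omega)
        have heq2 : (n - j) - (m - j) = n - m := by omega
        rw [heq2] at h2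
        have hA' := hsuper j (m - j)
        have heq : j + (m - j) + 1 = m + 1 := by omega
        rw [heq] at hA'
        have hB' := hstep (m + 1) (by omega)
        rw [Nat.add_sub_cancel] at hB'
        have hcast : ((m + 1 : ℕ):ℝ) ≤ (n:ℝ) + 1 := by
          have h : (m + 1 : ℕ) ≤ n + 1 := by omega
          calc ((m + 1 : ℕ):ℝ) ≤ ((n + 1 : ℕ):ℝ) := by exact_mod_cast h
            _ = (n:ℝ) + 1 := by push_cast; ring
        have h3 : s j * s (m - j) ≤ C * (C * ((n:ℝ) + 1) * s 1 * s m) := by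
          have h4 : s j * s (m - j) ≤ C * s (m + 1) := by
            rw [div_le_iff₀ hC0] at hA'
            linarith [hA']
          have h5 : s (m + 1) ≤ C * ((n:ℝ) + 1) * s 1 * s m := by
            calc s (m + 1) ≤ C * ((m + 1 : ℕ):ℝ) * s 1 * s m := hB'
              _ ≤ C * ((n:ℝ) + 1) * s 1 * s m := by
                  have h6 : C * ((m + 1 : ℕ):ℝ) * (s 1 * s m)
                      ≤ C * ((n:ℝ) + 1) * (s 1 * s m) :=
                    mul_le_mul_of_nonneg_right (mul_le_mul_of_nonneg_left hcast hC0.le)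
                      (mul_nonneg (hsnn 1) (hsnn m))
                  nlinarith [h6]
          calc s j * s (m - j) ≤ C * s (m + 1) := h4
            _ ≤ C * (C * ((n:ℝ) + 1) * s 1 * s m) :=
                mul_le_mul_of_nonneg_left h5 hC0.le
        have hk := hkey n hn2 (n - j) hnj1 hnj23
        calc s n ≤ C * (n:ℝ) ^ K * s j * s (n - j) := hsp
          _ ≤ C * (n:ℝ) ^ K * s j *
                (A * ((n - j : ℕ):ℝ) ^ (B * Real.log ((n - j : ℕ):ℝ)) * s (m - j) * s (n - m)) := by
              have hp : (0:ℝ) ≤ C * (n:ℝ) ^ K * s j := by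
                apply_rules [mul_nonneg, hsnn, hC0.le, Real.rpow_nonneg, Nat.cast_nonneg]
              exact mul_le_mul_of_nonneg_left h2 hp
          _ = C * (n:ℝ) ^ K * A * ((n - j : ℕ):ℝ) ^ (B * Real.log ((n - j : ℕ):ℝ)) * s (n - m) *
                (s j * s (m - j)) := by ring
          _ ≤ C * (n:ℝ) ^ K * A * ((n - j : ℕ):ℝ) ^ (B * Real.log ((n - j : ℕ):ℝ)) * s (n - m) *
                (C * (C * ((n:ℝ) + 1) * s 1 * s m)) := by
              have hp : (0:ℝ) ≤ C * (n:ℝ) ^ K * A *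
                  ((n - j : ℕ):ℝ) ^ (B * Real.log ((n - j : ℕ):ℝ)) * s (n - m) := by
                apply_rules [mul_nonneg, hsnn, hC0.le, hA0.le, Real.rpow_nonneg,
                  Nat.cast_nonneg]
              exact mul_le_mul_of_nonneg_left h3 hp
          _ = A * (C * C * C * s 1 * (n:ℝ) ^ K * ((n:ℝ) + 1) *
                ((n - j : ℕ):ℝ) ^ (B * Real.log ((n - j : ℕ):ℝ))) * (s m * s (n - m)) := by ring
          _ ≤ A * (n:ℝ) ^ (B * Real.log n) * (s m * s (n - m)) := by
              have hp : (0:ℝ) ≤ s m * s (n - m) := mul_nonneg (hsnn m) (hsnn (n - m))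
              exact mul_le_mul_of_nonneg_right (mul_le_mul_of_nonneg_left hk hA0.le) hp
          _ = A * (n:ℝ) ^ (B * Real.log n) * s m * s (n - m) := by ring
    · -- base case n = 1
      have hn : n = 1 := by omega
      subst hn
      have h1 : ((1:ℕ):ℝ) ^ (B * Real.log ((1:ℕ):ℝ)) = 1 := by
        norm_num
      rw [h1]
      interval_cases m
      · simp only [Nat.sub_zero]
        have := hpos 1
        nlinarith [hAs0]
      · simp only [Nat.sub_self]
        have := hpos 1; have := hpos 0
        nlinarith [hAs0]
end

section
/- If s' : ℕ → ℝ is a positive sequence satisfying s'(n) ≤ s'(m)·s'(n-m) for every n ≥ 2 and every integer m with n/3 ≤ m ≤ 2n/3, then lim_{n→∞} (s'(n))^{1/n} exists and equals inf_{n≥1} (s'(n))^{1/n}. -/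
open Filter

private lemma log_mult (s' : ℕ → ℝ) (hpos : ∀ n, 0 < s' n)
    (hsub : ∀ n : ℕ, 2 ≤ n → ∀ m : ℕ, (n : ℝ) / 3 ≤ (m : ℝ) →
      (m : ℝ) ≤ 2 * (n : ℝ) / 3 → s' n ≤ s' m * s' (n - m))
    (n₀ : ℕ) (hn₀ : 1 ≤ n₀) :
    ∀ q : ℕ, 1 ≤ q → Real.log (s' (q * n₀)) ≤ q * Real.log (s' n₀) := by
  intro q
  induction q using Nat.strong_induction_on with
  | _ q ih =>
    intro hq
    rcases Nat.lt_or_ge q 2 with h2 | h2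
    · interval_cases q
      simp
    · set m := q / 2 with hm
      have h1 : 2 * m ≤ q := by omega
      have h3 : q ≤ 3 * m := by omega
      have hm1 : 1 ≤ m := by omega
      have hmlt : m < q := by omega
      have hqm1 : 1 ≤ q - m := by omega
      have hqmlt : q - m < q := by omega
      have hn0R : (0:ℝ) < (n₀ : ℝ) := by exact_mod_cast hn₀
      have hq3R : (q:ℝ) ≤ 3 * m := by exact_mod_cast h3
      have hq1R : 2 * (m:ℝ) ≤ q := by exact_mod_cast h1
      have key := hsub (q * n₀) (by nlinarith [hn0R, (by exact_mod_cast h2 : (2:ℝ) ≤ (q:ℝ)),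
          (by exact_mod_cast Nat.le_mul_of_pos_right q (by omega) : (q:ℝ) ≤ (q*n₀ : ℕ))])
        (m * n₀) ?_ ?_
      · have hsubst : q * n₀ - m * n₀ = (q - m) * n₀ := by
          rw [Nat.sub_mul]
        rw [hsubst] at key
        have hlog := Real.log_le_log (hpos _) key
        rw [Real.log_mul (ne_of_gt (hpos _)) (ne_of_gt (hpos _))] at hlog
        have i1 := ih m hmlt hm1
        have i2 := ih (q - m) hqmlt hqm1
        have hcast : ((q - m : ℕ) : ℝ) = (q:ℝ) - m := by
          push_cast [Nat.cast_sub (le_of_lt hmlt)]; ring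
        calc Real.log (s' (q * n₀)) ≤ Real.log (s' (m * n₀)) + Real.log (s' ((q - m) * n₀)) := hlog
          _ ≤ m * Real.log (s' n₀) + ((q - m : ℕ) : ℝ) * Real.log (s' n₀) := by
              rw [hcast] at i2 ⊢; linarith
          _ = q * Real.log (s' n₀) := by rw [hcast]; ring
      · push_cast
        nlinarith
      · push_cast
        nlinarith

private lemma window_bound (s' : ℕ → ℝ) (hpos : ∀ n, 0 < s' n)
    (hsub : ∀ n : ℕ, 2 ≤ n → ∀ m : ℕ, (n : ℝ) / 3 ≤ (m : ℝ) →
      (m : ℝ) ≤ 2 * (n : ℝ) / 3 → s' n ≤ s' m * s' (n - m))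
    (n₀ : ℕ) (hn₀ : 1 ≤ n₀) (b : ℝ) (hb : Real.log (s' n₀) ≤ b * n₀) :
    ∃ D : ℝ, ∀ j : ℕ, n₀ ≤ j → Real.log (s' j) ≤ b * j + D := by
  classical
  have hne : (Finset.Icc n₀ (6 * n₀)).Nonempty := by
    rw [Finset.nonempty_Icc]; omega
  set D := (Finset.Icc n₀ (6 * n₀)).sup' hne (fun p => Real.log (s' p) - b * p) with hD
  refine ⟨D, ?_⟩
  intro j
  induction j using Nat.strong_induction_on with
  | _ j ih =>
    intro hj
    rcases Nat.lt_or_ge j (6 * n₀) with hsmall | hbig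
    · have hmem : j ∈ Finset.Icc n₀ (6 * n₀) := by
        rw [Finset.mem_Icc]; omega
      have : Real.log (s' j) - b * j ≤ D :=
        Finset.le_sup' (fun p => Real.log (s' p) - b * p) hmem
      linarith
    · set q := j / (2 * n₀) with hqdef
      set r := j % (2 * n₀) with hrdef
      have hqr : 2 * n₀ * q + r = j := Nat.div_add_mod j (2 * n₀)
      have hr : r < 2 * n₀ := Nat.mod_lt _ (by omega)
      have hq3 : 3 ≤ q := by
        rw [hqdef, Nat.le_div_iff_mul_le (by omega)]
        omega
      set a := q * n₀ with hadef
      have ha3 : 3 * n₀ ≤ a := by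
        rw [hadef]
        exact Nat.mul_le_mul_right _ hq3
      have h2a : 2 * n₀ * q = 2 * a := by rw [hadef]; ring
      have hj2a : j = 2 * a + r := by omega
      -- nat facts
      have haj : a ≤ j := by omega
      have hja3 : j ≤ 3 * a := by omega
      have h3a2j : 3 * a ≤ 2 * j := by omega
      have hnja : n₀ ≤ j - a := by omega
      have hjaj : j - a < j := by omega
      -- apply hsub
      have key := hsub j (by omega) a ?_ ?_
      · have hlog := Real.log_le_log (hpos _) key
        rw [Real.log_mul (ne_of_gt (hpos _)) (ne_of_gt (hpos _))] at hlog
        have i1 : Real.log (s' a) ≤ b * a := by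
          have := log_mult s' hpos hsub n₀ hn₀ q (by omega)
          rw [← hadef] at this
          have h2 : (q:ℝ) * Real.log (s' n₀) ≤ (q:ℝ) * (b * n₀) :=
            mul_le_mul_of_nonneg_left hb (by positivity)
          have h3 : (q:ℝ) * (b * n₀) = b * (a:ℝ) := by
            rw [hadef]; push_cast; ring
          linarith
        have i2 : Real.log (s' (j - a)) ≤ b * ((j - a : ℕ) : ℝ) + D := ih (j - a) hjaj hnja
        have hcast : ((j - a : ℕ) : ℝ) = (j:ℝ) - a := by
          push_cast [Nat.cast_sub haj]; ring
        rw [hcast] at i2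
        linarith
      · have : (j:ℝ) ≤ 3 * (a:ℝ) := by exact_mod_cast hja3
        linarith
      · have : 3 * (a:ℝ) ≤ 2 * (j:ℝ) := by exact_mod_cast h3a2j
        linarith

theorem stmt_10 (s' : ℕ → ℝ) (hpos : ∀ n, 0 < s' n)
    (hsub : ∀ n : ℕ, 2 ≤ n → ∀ m : ℕ, (n : ℝ) / 3 ≤ (m : ℝ) →
      (m : ℝ) ≤ 2 * (n : ℝ) / 3 → s' n ≤ s' m * s' (n - m)) :
    Tendsto (fun n : ℕ => s' n ^ (1 / (n : ℝ))) atTop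
      (nhds (sInf {x : ℝ | ∃ n : ℕ, 1 ≤ n ∧ x = s' n ^ (1 / (n : ℝ))})) := by
  set u : ℕ → ℝ := fun n => Real.log (s' n) / n with hu
  have hfun : (fun n : ℕ => s' n ^ (1 / (n:ℝ))) = fun n : ℕ => Real.exp (u n) := by
    funext n
    rw [Real.rpow_def_of_pos (hpos n), mul_one_div]
  set T := {y : ℝ | ∃ n : ℕ, 1 ≤ n ∧ y = u n} with hT
  have hTne : T.Nonempty := ⟨u 1, 1, le_refl 1, rfl⟩
  have hSset : {x : ℝ | ∃ n : ℕ, 1 ≤ n ∧ x = s' n ^ (1/(n:ℝ))} = Real.exp '' T := by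
    ext x
    constructor
    · rintro ⟨n, hn, rfl⟩
      exact ⟨u n, ⟨n, hn, rfl⟩, (congrFun hfun n).symm⟩
    · rintro ⟨y, ⟨n, hn, rfl⟩, rfl⟩
      exact ⟨n, hn, (congrFun hfun n).symm⟩
  -- key eventual bound
  have hkey : ∀ b : ℝ, (∃ n₀ : ℕ, 1 ≤ n₀ ∧ u n₀ < b) → ∀ᶠ n in atTop, u n < b := by
    rintro b ⟨n₀, hn₀, hub⟩
    have hn0R : (0:ℝ) < (n₀:ℝ) := by exact_mod_cast hn₀
    have hb' : Real.log (s' n₀) ≤ u n₀ * n₀ := by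
      rw [hu]
      simp only
      rw [div_mul_cancel₀ _ (ne_of_gt hn0R)]
    obtain ⟨D, hD⟩ := window_bound s' hpos hsub n₀ hn₀ (u n₀) hb'
    have hDiv : Tendsto (fun n : ℕ => u n₀ + D / (n:ℝ)) atTop (nhds (u n₀ + 0)) := by
      refine tendsto_const_nhds.add ?_
      exact Tendsto.div_atTop tendsto_const_nhds tendsto_natCast_atTop_atTop
    have hev : ∀ᶠ n : ℕ in atTop, u n₀ + D / (n:ℝ) < b := by
      apply hDiv.eventually_lt_const
      rw [add_zero]; exact hub
    filter_upwards [eventually_ge_atTop n₀, hev] with n h1 h2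
    have hnR : (0:ℝ) < (n:ℝ) := by
      have : 1 ≤ n := le_trans hn₀ h1
      exact_mod_cast this
    have hlog := hD n h1
    have : u n ≤ u n₀ + D / (n:ℝ) := by
      rw [hu]
      simp only
      rw [div_le_iff₀ hnR]
      have : (u n₀ + D / (n:ℝ)) * n = u n₀ * n + D := by
        field_simp
      linarith [this, hlog]
    linarith
  rw [hfun, hSset]
  by_cases hbd : BddBelow T
  · have hL : Tendsto u atTop (nhds (sInf T)) := by
      rw [tendsto_order]
      constructor
      · intro x hx
        filter_upwards [eventually_ge_atTop 1] with n hn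
        have : sInf T ≤ u n := csInf_le hbd ⟨n, hn, rfl⟩
        linarith
      · intro x hx
        obtain ⟨y, ⟨n₀, hn₀, rfl⟩, hy⟩ := exists_lt_of_csInf_lt hTne hx
        exact hkey x ⟨n₀, hn₀, hy⟩
    have hmap : Real.exp (sInf T) = sInf (Real.exp '' T) :=
      Monotone.map_csInf_of_continuousAt (Real.continuous_exp.continuousAt)
        Real.exp_monotone hTne hbd
    rw [← hmap]
    exact (Real.continuous_exp.continuousAt.tendsto).comp hL
  · have hbot : Tendsto u atTop atBot := by
      rw [tendsto_atBot]
      intro b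
      obtain ⟨y, hyT, hy⟩ := not_bddBelow_iff.1 hbd b
      obtain ⟨n₀, hn₀, rfl⟩ := hyT
      exact (hkey b ⟨n₀, hn₀, hy⟩).mono fun n h => h.le
    have h0 : Tendsto (fun n : ℕ => Real.exp (u n)) atTop (nhds 0) :=
      Real.tendsto_exp_atBot.comp hbot
    have hinf : sInf (Real.exp '' T) = 0 := by
      apply csInf_eq_of_forall_ge_of_forall_gt_exists_lt (hTne.image _)
      · rintro x ⟨y, _, rfl⟩
        exact (Real.exp_pos y).le
      · intro w hw
        obtain ⟨y, hyT, hy⟩ := not_bddBelow_iff.1 hbd (Real.log w)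
        refine ⟨Real.exp y, ⟨y, hyT, rfl⟩, ?_⟩
        calc Real.exp y < Real.exp (Real.log w) := Real.exp_lt_exp.2 hy
          _ = w := Real.exp_log hw
    rw [hinf]
    exact h0
end

section
/- For the Catalan numbers C, for every n ≥ 2 there exists j with (n-1)/3 ≤ j ≤ (2n+1)/3 such that C(n) ≤ 2·n²·C(j)·C(n-j). -/
/-!
By Vandermonde, `binom(2a+2b, a+b)` is a sum of `a+b+1` products `binom(2a,i)·binom(2b,k)`, each at
most `binom(2a,a)·binom(2b,b)`. Dividing through `(m+1)·C(m) = binom(2m,m)` gives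
`C(a+b) ≤ (a+1)(b+1)·C(a)·C(b)`, and the split `j = ⌈n/2⌉` is balanced with `(j+1)(n-j+1) ≤ 2n²`.
-/

open Finset Nat

theorem Nat.centralBinom_add_le (a b : ℕ) :
    centralBinom (a + b) ≤ (a + b + 1) * (centralBinom a * centralBinom b) := by
  calc centralBinom (a + b)
      = ∑ ik ∈ antidiagonal (a + b), (2 * a).choose ik.1 * (2 * b).choose ik.2 := by
        rw [centralBinom, mul_add, add_choose_eq]
    _ ≤ ∑ _ik ∈ antidiagonal (a + b), centralBinom a * centralBinom b :=
        sum_le_sum fun ik _ => Nat.mul_le_mul (choose_le_centralBinom _ _) (choose_le_centralBinom _ _)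
    _ = (a + b + 1) * (centralBinom a * centralBinom b) := by
        rw [sum_const, Nat.card_antidiagonal, smul_eq_mul]

theorem catalan_add_le (a b : ℕ) :
    catalan (a + b) ≤ (a + 1) * (b + 1) * (catalan a * catalan b) := by
  refine Nat.le_of_mul_le_mul_left ?_ (Nat.succ_pos (a + b))
  calc (a + b + 1) * catalan (a + b)
      = centralBinom (a + b) := succ_mul_catalan_eq_centralBinom _
    _ ≤ (a + b + 1) * (centralBinom a * centralBinom b) := Nat.centralBinom_add_le a b
    _ = (a + b + 1) * ((a + 1) * (b + 1) * (catalan a * catalan b)) := by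
        rw [← succ_mul_catalan_eq_centralBinom a, ← succ_mul_catalan_eq_centralBinom b]
        ring

theorem stmt_13 : ∀ n : ℕ, 2 ≤ n → ∃ j : ℕ,
    ((n : ℝ) - 1) / 3 ≤ (j : ℝ) ∧ (j : ℝ) ≤ (2 * (n : ℝ) + 1) / 3 ∧
    catalan n ≤ 2 * n ^ 2 * catalan j * catalan (n - j) := by
  intro n hn
  obtain ⟨j, hj_lower, hj_upper⟩ : ∃ j, n ≤ 2 * j ∧ 2 * j ≤ n + 1 := ⟨(n + 1) / 2, by omega, by omega⟩
  have hjn : j + (n - j) = n := by omega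
  have hcoef : (j + 1) * (n - j + 1) ≤ 2 * n ^ 2 := by nlinarith
  refine ⟨j, ?_, ?_, ?_⟩
  · have : (n : ℝ) ≤ 2 * j := by exact_mod_cast hj_lower
    linarith
  · have : (2 * j : ℝ) ≤ n + 1 := by exact_mod_cast hj_upper
    have : (2 : ℝ) ≤ n := by exact_mod_cast hn
    linarith
  · calc catalan n = catalan (j + (n - j)) := by rw [hjn]
      _ ≤ (j + 1) * (n - j + 1) * (catalan j * catalan (n - j)) := catalan_add_le j (n - j)
      _ ≤ 2 * n ^ 2 * (catalan j * catalan (n - j)) := Nat.mul_le_mul_right _ hcoef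
      _ = 2 * n ^ 2 * catalan j * catalan (n - j) := (Nat.mul_assoc _ _ _).symm
end

section
/- Let s : ℕ → ℝ satisfy s(0) = 1, s positive, s(u+v+1) ≥ κ·s(u)·s(v) for all u,v ≥ 0 with κ > 0, and s(n) ≤ L·(n-1)·s(1)·s(n-1) for all n ≥ 2 with L ≥ 1. Then λ := lim s(n)^{1/n} satisfies λ ≥ (κ·s(n)/(L·(n-1)·s(1)))^{1/n} for every n ≥ 2. -/
/-!
Iterating the almost-supermultiplicativity `κ s(u) s(v) ≤ s(u + v + 1)` with `u` running through
`m, 2m + 1, 3m + 2, …` gives `(κ s(m))^k s(m) ≤ s(k(m + 1) + m)`. Taking `1/(k(m + 1) + m)`-th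
roots and letting `k → ∞` yields `(κ s(m))^{1/(m+1)} ≤ λ`. Finally, `s(n) ≤ L (n - 1) s(1) s(n - 1)`
bounds `κ s(n) / (L (n - 1) s(1))` by `κ s(n - 1)`, which is the case `m = n - 1`.
-/

open Filter Topology

lemma mul_pow_mul_le_of_le_add_add_one {s : ℕ → ℝ} {κ : ℝ} (hκ : 0 ≤ κ) (hs : ∀ n, 0 ≤ s n)
    (hsuper : ∀ u v : ℕ, κ * s u * s v ≤ s (u + v + 1)) (m k : ℕ) :
    (κ * s m) ^ k * s m ≤ s (k * (m + 1) + m) := by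
  induction k with
  | zero => simp
  | succ k ih =>
    calc (κ * s m) ^ (k + 1) * s m = κ * ((κ * s m) ^ k * s m) * s m := by ring
      _ ≤ κ * s (k * (m + 1) + m) * s m := by gcongr; exact hs m
      _ ≤ s (k * (m + 1) + m + m + 1) := hsuper _ _
      _ = s ((k + 1) * (m + 1) + m) := by congr 1; ring

lemma tendsto_pow_mul_rpow_one_div {c a p : ℝ} (hc : 0 < c) (ha : 0 < a) (hp : 0 < p) (q : ℝ) :
    Tendsto (fun k : ℕ => (c ^ k * a) ^ (1 / (k * p + q))) atTop (𝓝 (c ^ (1 / p))) := by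
  have hden : Tendsto (fun k : ℕ => (k : ℝ) * p + q) atTop atTop :=
    tendsto_atTop_add_const_right _ q (tendsto_natCast_atTop_atTop.atTop_mul_const hp)
  have hinv : Tendsto (fun k : ℕ => 1 / ((k : ℝ) * p + q)) atTop (𝓝 0) := by
    simpa only [one_div, Function.comp_def] using tendsto_inv_atTop_zero.comp hden
  -- `k e = (1 - q e) / p` for `e = 1 / (k p + q)`
  have hexp : Tendsto (fun k : ℕ => (k : ℝ) * (1 / (k * p + q))) atTop (𝓝 (1 / p)) := by
    have hlim : Tendsto (fun k : ℕ => (1 - q * (1 / ((k : ℝ) * p + q))) / p) atTop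
        (𝓝 ((1 - q * 0) / p)) := ((hinv.const_mul q).const_sub 1).div_const p
    rw [mul_zero, sub_zero] at hlim
    refine hlim.congr' ?_
    filter_upwards [hden.eventually_gt_atTop 0] with k hk
    field_simp
    ring
  have hlim := (tendsto_const_nhds.rpow hexp (Or.inl hc.ne')).mul
    (tendsto_const_nhds.rpow hinv (Or.inl ha.ne'))
  rw [Real.rpow_zero, mul_one] at hlim
  refine hlim.congr fun k => ?_
  rw [Real.mul_rpow (pow_nonneg hc.le k) ha.le, Real.rpow_natCast_mul hc.le]

lemma ofReal_mul_rpow_le_of_tendsto {s : ℕ → ℝ} {κ : ℝ} {lam : ENNReal} (hκ : 0 < κ)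
    (hs : ∀ n, 0 < s n) (hsuper : ∀ u v : ℕ, κ * s u * s v ≤ s (u + v + 1))
    (hlam : Tendsto (fun n : ℕ => ENNReal.ofReal (s n ^ (1 / (n : ℝ)))) atTop (𝓝 lam)) (m : ℕ) :
    ENNReal.ofReal ((κ * s m) ^ (1 / ((m : ℝ) + 1))) ≤ lam := by
  have hφ : Tendsto (fun k : ℕ => k * (m + 1) + m) atTop atTop :=
    tendsto_atTop_mono (fun k => le_add_right (Nat.le_mul_of_pos_right k m.succ_pos)) tendsto_id
  have hlower := (ENNReal.continuous_ofReal.tendsto _).comp <|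
    tendsto_pow_mul_rpow_one_div (mul_pos hκ (hs m)) (hs m) (Nat.cast_add_one_pos m) m
  refine le_of_tendsto_of_tendsto' hlower (hlam.comp hφ) fun k => ENNReal.ofReal_le_ofReal ?_
  have hbound := mul_pow_mul_le_of_le_add_add_one hκ.le (fun n => (hs n).le) hsuper m k
  push_cast
  have := hs m
  gcongr

theorem stmt_15_general (s : ℕ → ℝ) (κ L : ℝ) (lam : ENNReal)
    (hpos : ∀ n, 0 < s n) (hκ : 0 < κ) (hL : 1 ≤ L)
    (hsuper : ∀ u v : ℕ, κ * s u * s v ≤ s (u + v + 1))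
    (hstep : ∀ n : ℕ, 2 ≤ n → s n ≤ L * ((n : ℝ) - 1) * s 1 * s (n - 1))
    (hlam : Tendsto (fun n : ℕ => ENNReal.ofReal (s n ^ (1 / (n : ℝ)))) atTop
      (nhds lam)) :
    ∀ n : ℕ, 2 ≤ n →
      ENNReal.ofReal ((κ * s n / (L * ((n : ℝ) - 1) * s 1)) ^ (1 / (n : ℝ)))
        ≤ lam := by
  intro n hn
  obtain ⟨m, rfl⟩ : ∃ m, n = m + 1 := ⟨n - 1, by omega⟩
  have hm : (1 : ℝ) ≤ m := by exact_mod_cast Nat.le_of_succ_le_succ hn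
  have hstep_m : s (m + 1) ≤ L * m * s 1 * s m := by simpa using hstep (m + 1) hn
  have hden : 0 < L * m * s 1 := by have := hpos 1; positivity
  have hbase : κ * s (m + 1) / (L * m * s 1) ≤ κ * s m := by
    rw [div_le_iff₀ hden, mul_assoc κ, mul_comm (s m)]
    exact mul_le_mul_of_nonneg_left hstep_m hκ.le
  refine le_trans (ENNReal.ofReal_le_ofReal ?_) (ofReal_mul_rpow_le_of_tendsto hκ hpos hsuper hlam m)
  rw [Nat.cast_add_one, add_sub_cancel_right]
  gcongr
  exact div_nonneg (mul_pos hκ (hpos _)).le hden.le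

theorem stmt_15 (s : ℕ → ℝ) (κ L : ℝ) (lam : ENNReal)
    (hpos : ∀ n, 0 < s n) (h0 : s 0 = 1) (hκ : 0 < κ) (hL : 1 ≤ L)
    (hsuper : ∀ u v : ℕ, κ * s u * s v ≤ s (u + v + 1))
    (hstep : ∀ n : ℕ, 2 ≤ n → s n ≤ L * ((n : ℝ) - 1) * s 1 * s (n - 1))
    (hlam : Tendsto (fun n : ℕ => ENNReal.ofReal (s n ^ (1 / (n : ℝ)))) atTop
      (nhds lam)) :
    ∀ n : ℕ, 2 ≤ n →
      ENNReal.ofReal ((κ * s n / (L * ((n : ℝ) - 1) * s 1)) ^ (1 / (n : ℝ)))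
        ≤ lam :=
  stmt_15_general s κ L lam hpos hκ hL hsuper hstep hlam
end

section
/- Let s : ℕ → ℝ satisfy s(0) = 1 and s(n) = Σ_{a+b=n-1} s(a)s(b) for n ≥ 1 (so s = Catalan). Then for all n ≥ 1 and all 0 ≤ m ≤ n: s(n) ≤ (4·n³)^{α·log n}·s(m)·s(n-m), where α = 1/log(3/2) and log is the natural logarithm. -/
open Finset

lemma cat_step (k : ℕ) :
    (k + 2) * catalan (k + 1) = (2 * (2 * k + 1)) * catalan k := by
  have h1 := succ_mul_catalan_eq_centralBinom (k + 1)
  have h2 := succ_mul_catalan_eq_centralBinom k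
  have h3 := Nat.succ_mul_centralBinom_succ k
  have : (k + 1) * ((k + 2) * catalan (k + 1)) =
      (k + 1) * ((2 * (2 * k + 1)) * catalan k) := by
    rw [show (k+1) * ((k+2) * catalan (k+1)) = (k+1) * ((k+1+1) * catalan (k+1)) by ring,
      h1]
    rw [h3, ← h2]; ring
  exact Nat.eq_of_mul_eq_mul_left (by omega) this

lemma cat_pos (k : ℕ) : 0 < catalan k := by
  induction k with
  | zero => simp [catalan]
  | succ n ih =>
    have h := cat_step n
    by_contra h0
    have : catalan (n+1) = 0 := by omega
    rw [this, Nat.mul_zero] at h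
    have : 0 < (2 * (2 * n + 1)) * catalan n := by positivity
    omega

lemma cat_stepR (k : ℕ) :
    ((k : ℝ) + 2) * catalan (k + 1) = (2 * (2 * k + 1)) * catalan k := by
  exact_mod_cast congrArg (fun x : ℕ => (x : ℝ)) (cat_step k)

lemma catA : ∀ m j : ℕ, (catalan (m + j) : ℝ) ≤
    ((m : ℝ) + 1) ^ 3 * catalan m * catalan j := by
  intro m
  induction m with
  | zero => intro j; simp [catalan]
  | succ n ih =>
    intro j
    have h1 : (catalan (n + 1 + j) : ℝ) ≤
        ((n : ℝ) + 1) ^ 3 * catalan n * catalan (j + 1) := by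
      have := ih (j + 1)
      have e : n + (j + 1) = n + 1 + j := by omega
      rwa [e] at this
    have hj := cat_stepR j
    have hn := cat_stepR n
    have pcn : (0 : ℝ) < catalan n := by exact_mod_cast cat_pos n
    have pcj : (0 : ℝ) < catalan j := by exact_mod_cast cat_pos j
    -- key: (n+1)^3 * c_n * c_{j+1} ≤ (n+2)^3 * c_{n+1} * c_j
    have key : ((n : ℝ) + 1) ^ 3 * catalan n * catalan (j + 1) ≤
        ((n : ℝ) + 2) ^ 3 * catalan (n + 1) * catalan j := by
      have hx : (0:ℝ) ≤ (n:ℝ) := Nat.cast_nonneg n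
      have hy : (0:ℝ) ≤ (j:ℝ) := Nat.cast_nonneg j
      have hpoly : ((n:ℝ)+1)^3*((n:ℝ)+2)*(2*(2*(j:ℝ)+1)) ≤
          ((n:ℝ)+2)^3*(2*(2*(n:ℝ)+1))*((j:ℝ)+2) := by
        nlinarith [sq_nonneg ((n:ℝ)), mul_nonneg hx hy, mul_nonneg (mul_nonneg hx hx) hy,
          mul_nonneg (mul_nonneg (mul_nonneg hx hx) hx) hy, sq_nonneg ((n:ℝ)*(j:ℝ))]
      have h := mul_le_mul_of_nonneg_right hpoly (mul_nonneg pcn.le pcj.le)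
      have hpos : (0:ℝ) < ((n:ℝ)+2)*((j:ℝ)+2) := by positivity
      have e1 : ((n:ℝ)+2)*((j:ℝ)+2) * (((n:ℝ)+1)^3 * (catalan n : ℝ) * (catalan (j+1) : ℝ)) =
          ((n:ℝ)+1)^3*((n:ℝ)+2)*(2*(2*(j:ℝ)+1)) * ((catalan n : ℝ) * (catalan j : ℝ)) := by
        linear_combination ((n:ℝ)+2)*((n:ℝ)+1)^3*(catalan n : ℝ) * hj
      have e2 : ((n:ℝ)+2)*((j:ℝ)+2) * (((n:ℝ)+2)^3 * (catalan (n+1) : ℝ) * (catalan j : ℝ)) =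
          ((n:ℝ)+2)^3*(2*(2*(n:ℝ)+1))*((j:ℝ)+2) * ((catalan n : ℝ) * (catalan j : ℝ)) := by
        linear_combination ((n:ℝ)+2)^3*((j:ℝ)+2)*(catalan j : ℝ)*hn
      have h' : ((n:ℝ)+2)*((j:ℝ)+2) * (((n:ℝ)+1)^3 * (catalan n : ℝ) * (catalan (j+1) : ℝ)) ≤
          ((n:ℝ)+2)*((j:ℝ)+2) * (((n:ℝ)+2)^3 * (catalan (n+1) : ℝ) * (catalan j : ℝ)) := by
        rw [e1, e2]; exact h
      exact le_of_mul_le_mul_left h' hpos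
    calc (catalan (n + 1 + j) : ℝ) ≤ ((n : ℝ) + 1) ^ 3 * catalan n * catalan (j + 1) := h1
      _ ≤ ((n : ℝ) + 2) ^ 3 * catalan (n + 1) * catalan j := key
      _ = ((n : ℝ) + 1 + 1) ^ 3 * catalan (n + 1) * catalan j := by ring
      _ = (((n + 1 : ℕ) : ℝ) + 1) ^ 3 * catalan (n + 1) * catalan j := by push_cast; ring

theorem stmt_17 (s : ℕ → ℝ) (h0 : s 0 = 1)
    (hrec : ∀ n, 1 ≤ n →
      s n = ∑ i ∈ Finset.range n, s i * s (n - 1 - i)) :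
    ∀ n : ℕ, 1 ≤ n → ∀ m : ℕ, m ≤ n →
      s n ≤ (4 * (n : ℝ) ^ 3) ^ ((1 / Real.log (3 / 2)) * Real.log n)
        * s m * s (n - m) := by
  -- s equals catalan
  have hs : ∀ k, s k = (catalan k : ℝ) := by
    intro k
    induction k using Nat.strong_induction_on with
    | _ k ih =>
      match k with
      | 0 => simpa [catalan] using h0
      | (n + 1) =>
        rw [hrec (n + 1) (by omega)]
        rw [catalan_succ']
        rw [Finset.Nat.sum_antidiagonal_eq_sum_range_succ
          (fun x y => catalan x * catalan y) n]
        push_cast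
        refine Finset.sum_congr rfl fun i hi => ?_
        simp only [Finset.mem_range] at hi
        rw [ih i (by omega), ih (n - i) (by omega)]
    
  intro n hn m hm
  rw [hs, hs, hs]
  rcases Nat.eq_or_lt_of_le hn with h1 | h2
  · -- n = 1
    subst h1
    interval_cases m <;>
      simp [catalan, Real.log_one]
  · -- n ≥ 2
    have hA := catA m (n - m)
    rw [show m + (n - m) = n by omega] at hA
    have hmn : ((m : ℝ) + 1) ^ 3 ≤ 4 * (n : ℝ) ^ 3 := by
      have hmr : (m : ℝ) ≤ n := by exact_mod_cast hm
      have h2' : (2 : ℝ) ≤ n := by exact_mod_cast h2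
      have h3 : (m : ℝ) + 1 ≤ (3/2) * n := by linarith
      have h4 : ((m : ℝ) + 1) ^ 3 ≤ ((3/2) * (n:ℝ)) ^ 3 :=
        pow_le_pow_left₀ (by positivity) h3 3
      have h5 : (0:ℝ) ≤ (n:ℝ)^3 := by positivity
      nlinarith [h4, h5]
    have pcm : (0 : ℝ) < catalan m := by exact_mod_cast cat_pos m
    have pcnm : (0 : ℝ) < catalan (n - m) := by exact_mod_cast cat_pos (n - m)
    have hbase : (1 : ℝ) ≤ 4 * (n : ℝ) ^ 3 := by
      have h2' : (2 : ℝ) ≤ n := by exact_mod_cast h2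
      have : (2:ℝ)^3 ≤ (n:ℝ)^3 := pow_le_pow_left₀ (by norm_num) h2' 3
      nlinarith [this]
    have hexp : (1 : ℝ) ≤ (1 / Real.log (3 / 2)) * Real.log n := by
      have hl32 : (0 : ℝ) < Real.log (3 / 2) := Real.log_pos (by norm_num)
      have hln : Real.log (3 / 2) ≤ Real.log n := by
        apply Real.log_le_log (by norm_num)
        have : (2 : ℝ) ≤ n := by exact_mod_cast h2
        linarith
      have e : (1 / Real.log (3/2)) * Real.log n = Real.log n / Real.log (3/2) := by ring
      rw [e, le_div_iff₀ hl32, one_mul]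
      exact hln
    have hpow : 4 * (n : ℝ) ^ 3 ≤ (4 * (n : ℝ) ^ 3) ^ ((1 / Real.log (3 / 2)) * Real.log n) := by
      calc 4 * (n : ℝ) ^ 3 = (4 * (n : ℝ) ^ 3) ^ (1 : ℝ) := (Real.rpow_one _).symm
        _ ≤ _ := Real.rpow_le_rpow_of_exponent_le hbase hexp
    calc (catalan n : ℝ) ≤ ((m : ℝ) + 1) ^ 3 * catalan m * catalan (n - m) := hA
      _ ≤ (4 * (n : ℝ) ^ 3) * catalan m * catalan (n - m) := by
          apply mul_le_mul_of_nonneg_right _ pcnm.le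
          exact mul_le_mul_of_nonneg_right hmn pcm.le
      _ ≤ (4 * (n : ℝ) ^ 3) ^ ((1 / Real.log (3 / 2)) * Real.log n)
          * catalan m * catalan (n - m) := by
          apply mul_le_mul_of_nonneg_right _ pcnm.le
          exact mul_le_mul_of_nonneg_right hpow pcm.le
end
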